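/- Let V be a complex vector space, j : V → V a quaternionic structure, and ω : V → V → ℂ a ℂ-bilinear alternating form. Define g(a, b) = −ω(a, j(b)) − ω(b, j(a)), I(a) = √(−1)·a, and for ζ ∈ ℂ define ψ_ζ(a, b) = ω(a − ζ·j(a), b − ζ·j(b)). Then for all a, b ∈ V: g(I(a), b) = −(√(−1)/2)·(ψ_{−1}(a, b) − ψ_{1}(a, b)). -/
import Mathlib


/-- With `g(a,b) = -ω(a, j b) - ω(b, j a)`, `I a = i•a` and
`ψ_ζ(a,b) = ω(a - ζ•j a, b - ζ•j b)`, one has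
`g(I a, b) = -(i/2)·(ψ_{-1}(a,b) - ψ_{1}(a,b))`. -/
theorem stmt_12 (V : Type*) [AddCommGroup V] [Module ℂ V]
    (j : V → V)
    (hconj : ∀ (l m : ℂ) (v w : V),
      j (l • v + m • w) = (starRingEnd ℂ) l • j v + (starRingEnd ℂ) m • j w)
    (hjj : ∀ v, j (j v) = -v)
    (ω : V →ₗ[ℂ] V →ₗ[ℂ] ℂ) (halt : ∀ x, ω x x = 0)
    (g : V → V → ℂ)
    (hg : ∀ a b, g a b = -ω a (j b) - ω b (j a))
    (I : V → V) (hI : ∀ v, I v = Complex.I • v)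
    (ψ : ℂ → V → V → ℂ)
    (hψ : ∀ (ζ : ℂ) (a b : V), ψ ζ a b = ω (a - ζ • j a) (b - ζ • j b)) :
    ∀ a b : V, g (I a) b = -(Complex.I / 2) * (ψ (-1) a b - ψ 1 a b) := by
  intro a b
  have hji : j (Complex.I • a) = -Complex.I • j a := by
    have := hconj Complex.I 0 a a
    simpa using this
  have hanti : ω b (j a) = -ω (j a) b := by
    have h := halt (b + j a)
    simp [map_add, halt] at h
    linear_combination h
  rw [hg, hI, hji, hψ, hψ]
  simp only [map_add, map_sub, map_smul, smul_eq_mul, neg_smul, map_neg,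
    one_smul, neg_one_smul, LinearMap.neg_apply, LinearMap.add_apply,
    LinearMap.sub_apply, LinearMap.smul_apply, halt]

  linear_combination Complex.I * hanti
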